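/- arXiv:2002.05852 — 11 statements merged into one kernel-verified Lean document; each statement's English description precedes it below -/
import Mathlib

section
/- Let X = σ² + a²P + b²Q and Y = σ² + Qb² − Pa². Then X² − 4a²b²PQ ≥ 0, and the pair (v₁*, v₂*) with v₂* = (X − √(X² − 4a²b²PQ))/(2ab√Q) and v₁* = √(P − v₂*²) is a well-defined (i.e., 0 ≤ v₂*² ≤ P) maximizer of a²v₁²/(σ² + (√Q·b − a·v₂)²) over all v₁, v₂ ≥ 0 with v₁² + v₂² ≤ P, and the maximum value equals γ*₁,S3 = (−Y + √(Y² + 4σ²Pa²))/(2σ²). -/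
/-!
Write `c = √Q·b` and let `γ` be the positive root of `σ²γ² + Yγ = a²P`. For every `v`,
`(γ + 1)(γ(σ² + (c - a v)²) - a²(P - v²)) = ((γ + 1) a v - γ c)²`,
so `a²(P - v²) ≤ γ(σ² + (c - a v)²)`, i.e. the SINR with `v₁² ≤ P - v₂²` never exceeds `γ`,
with equality exactly when `(γ + 1) a v₂ = γ c` and `v₁² = P - v₂²`. The closed form `v₂*` is this
point, because `X² - 4a²b²PQ = Y² + 4σ²Pa²` makes both formulas use the same square root.
-/

namespace PowerAllocationS3

/-- UE1's SINR under out-of-phase cooperation, with `c = √Q·b` the interfering amplitude. -/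
noncomputable def sinr (a c σ2 v1 v2 : ℝ) : ℝ := a ^ 2 * v1 ^ 2 / (σ2 + (c - a * v2) ^ 2)

lemma mul_sq_add_mul_eq_of_root {A B C s : ℝ} (hA : A ≠ 0) (hs : s ^ 2 = B ^ 2 + 4 * A * C) :
    A * ((-B + s) / (2 * A)) ^ 2 + B * ((-B + s) / (2 * A)) = C := by
  field_simp
  linear_combination hs

lemma root_pos {A B C s : ℝ} (hA : 0 < A) (hC : 0 < C) (hs0 : 0 ≤ s)
    (hs : s ^ 2 = B ^ 2 + 4 * A * C) : 0 < (-B + s) / (2 * A) := by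
  have : B < s := by nlinarith [mul_pos hA hC]
  apply div_pos <;> linarith

section Certificate

variable {a c P σ2 γ : ℝ}

lemma add_one_mul_sub_eq_sq (hγ : σ2 * γ ^ 2 + (σ2 + c ^ 2 - a ^ 2 * P) * γ = a ^ 2 * P)
    (v : ℝ) :
    (γ + 1) * (γ * (σ2 + (c - a * v) ^ 2) - a ^ 2 * (P - v ^ 2))
      = ((γ + 1) * (a * v) - γ * c) ^ 2 := by
  linear_combination hγ

lemma mul_sub_sq_le (hγ : σ2 * γ ^ 2 + (σ2 + c ^ 2 - a ^ 2 * P) * γ = a ^ 2 * P)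
    (hγ1 : 0 < γ + 1) (v : ℝ) :
    a ^ 2 * (P - v ^ 2) ≤ γ * (σ2 + (c - a * v) ^ 2) := by
  have h := add_one_mul_sub_eq_sq hγ v
  have : 0 ≤ γ * (σ2 + (c - a * v) ^ 2) - a ^ 2 * (P - v ^ 2) :=
    (mul_nonneg_iff_of_pos_left hγ1).mp (h ▸ sq_nonneg _)
  linarith

lemma mul_sub_sq_eq (hγ : σ2 * γ ^ 2 + (σ2 + c ^ 2 - a ^ 2 * P) * γ = a ^ 2 * P)
    (hγ1 : γ + 1 ≠ 0) {v : ℝ} (hv : (γ + 1) * (a * v) = γ * c) :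
    a ^ 2 * (P - v ^ 2) = γ * (σ2 + (c - a * v) ^ 2) := by
  have h := add_one_mul_sub_eq_sq hγ v
  rw [hv, sub_self, zero_pow two_ne_zero, mul_eq_zero] at h
  exact (sub_eq_zero.mp (h.resolve_left hγ1)).symm

lemma sinr_le (hσ : 0 < σ2) (hγ : σ2 * γ ^ 2 + (σ2 + c ^ 2 - a ^ 2 * P) * γ = a ^ 2 * P)
    (hγ1 : 0 < γ + 1) {v1 v2 : ℝ} (hv : v1 ^ 2 + v2 ^ 2 ≤ P) :
    sinr a c σ2 v1 v2 ≤ γ := by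
  rw [sinr, div_le_iff₀ (by positivity)]
  calc a ^ 2 * v1 ^ 2 ≤ a ^ 2 * (P - v2 ^ 2) := by gcongr; linarith
    _ ≤ γ * (σ2 + (c - a * v2) ^ 2) := mul_sub_sq_le hγ hγ1 v2

lemma sinr_eq (hσ : 0 < σ2) (hγ : σ2 * γ ^ 2 + (σ2 + c ^ 2 - a ^ 2 * P) * γ = a ^ 2 * P)
    (hγ1 : γ + 1 ≠ 0) {v1 v2 : ℝ} (hv2 : (γ + 1) * (a * v2) = γ * c)
    (hv1 : v1 ^ 2 = P - v2 ^ 2) :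
    sinr a c σ2 v1 v2 = γ := by
  rw [sinr, div_eq_iff (by positivity), hv1]
  exact mul_sub_sq_eq hγ hγ1 hv2

end Certificate

/-- The closed form `v₂*` is the equality point `(γ + 1) a v₂ = γ c` of the certificate. -/
lemma add_one_mul_mul_closedForm_eq {a c P σ2 S : ℝ} (hσ : σ2 ≠ 0) (ha : a ≠ 0) (hc : c ≠ 0)
    (hS : S ^ 2 = (σ2 + c ^ 2 - a ^ 2 * P) ^ 2 + 4 * σ2 * P * a ^ 2) :
    ((-(σ2 + c ^ 2 - a ^ 2 * P) + S) / (2 * σ2) + 1)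
        * (a * ((σ2 + a ^ 2 * P + c ^ 2 - S) / (2 * a * c)))
      = (-(σ2 + c ^ 2 - a ^ 2 * P) + S) / (2 * σ2) * c := by
  field_simp
  linear_combination -hS

end PowerAllocationS3

open PowerAllocationS3

open Real in
/-- Optimal solution and optimal value of problem (P-S3). -/
theorem stmt_2 (a b P Q σ2 : ℝ) (ha : 0 < a) (hb : 0 < b) (hP : 0 < P)
    (hQ : 0 < Q) (hσ : 0 < σ2)
    (X Y v1star v2star : ℝ)
    (hX : X = σ2 + a ^ 2 * P + b ^ 2 * Q)
    (hY : Y = σ2 + Q * b ^ 2 - P * a ^ 2)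
    (hv2 : v2star = (X - Real.sqrt (X ^ 2 - 4 * a ^ 2 * b ^ 2 * P * Q)) /
      (2 * a * b * Real.sqrt Q))
    (hv1 : v1star = Real.sqrt (P - v2star ^ 2)) :
    X ^ 2 - 4 * a ^ 2 * b ^ 2 * P * Q ≥ 0 ∧
    (0 ≤ v2star ^ 2 ∧ v2star ^ 2 ≤ P) ∧
    (0 ≤ v1star ∧ 0 ≤ v2star ∧ v1star ^ 2 + v2star ^ 2 ≤ P) ∧
    (∀ v1 v2 : ℝ, 0 ≤ v1 → 0 ≤ v2 → v1 ^ 2 + v2 ^ 2 ≤ P →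
      a ^ 2 * v1 ^ 2 / (σ2 + (Real.sqrt Q * b - a * v2) ^ 2) ≤
      a ^ 2 * v1star ^ 2 / (σ2 + (Real.sqrt Q * b - a * v2star) ^ 2)) ∧
    a ^ 2 * v1star ^ 2 / (σ2 + (Real.sqrt Q * b - a * v2star) ^ 2) =
      (-Y + Real.sqrt (Y ^ 2 + 4 * σ2 * P * a ^ 2)) / (2 * σ2) := by
  set c := √Q * b
  have hc : 0 < c := by positivity
  have hc2 : b ^ 2 * Q = c ^ 2 := by rw [mul_pow, sq_sqrt hQ.le, mul_comm]
  have hYc : Y = σ2 + c ^ 2 - a ^ 2 * P := by rw [hY, ← hc2]; ring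
  have hD : X ^ 2 - 4 * a ^ 2 * b ^ 2 * P * Q = Y ^ 2 + 4 * σ2 * P * a ^ 2 := by
    rw [hX, hc2, hYc]; linear_combination (-4 * a ^ 2 * P) * hc2
  have hS : √(Y ^ 2 + 4 * σ2 * P * a ^ 2) ^ 2 = Y ^ 2 + 4 * σ2 * (a ^ 2 * P) := by
    rw [sq_sqrt (by positivity)]; ring
  set γ := (-Y + √(Y ^ 2 + 4 * σ2 * P * a ^ 2)) / (2 * σ2)
  have hγpos : 0 < γ := root_pos hσ (by positivity) (sqrt_nonneg _) hS
  have hγ : σ2 * γ ^ 2 + (σ2 + c ^ 2 - a ^ 2 * P) * γ = a ^ 2 * P :=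
    hYc ▸ mul_sq_add_mul_eq_of_root hσ.ne' hS
  have hv2root : (γ + 1) * (a * v2star) = γ * c := by
    rw [hv2, hD, hX, hc2, show 2 * a * b * √Q = 2 * a * c by ring]
    subst hYc
    exact add_one_mul_mul_closedForm_eq hσ.ne' ha.ne' hc.ne' (sq_sqrt (by positivity))
  have hv2nn : 0 ≤ v2star := by
    have : 0 < (γ + 1) * (a * v2star) := hv2root ▸ by positivity
    exact (pos_of_mul_pos_right (pos_of_mul_pos_right this (by linarith)) ha.le).le
  have hopt := mul_sub_sq_eq hγ (by linarith) hv2root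
  have hv2P : v2star ^ 2 < P := by
    have : 0 < a ^ 2 * (P - v2star ^ 2) := hopt ▸ by positivity
    linarith [pos_of_mul_pos_right this (by positivity)]
  have hv1sq : v1star ^ 2 = P - v2star ^ 2 := by rw [hv1, sq_sqrt (by linarith)]
  have hval : sinr a c σ2 v1star v2star = γ := sinr_eq hσ hγ (by linarith) hv2root hv1sq
  refine ⟨hD ▸ by positivity, ⟨sq_nonneg _, hv2P.le⟩, ⟨hv1 ▸ sqrt_nonneg _, hv2nn, by linarith⟩,
    fun v1 v2 _ _ hv => ?_, hval⟩
  exact (sinr_le hσ hγ (by linarith) hv).trans_eq hval.symm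
end

section
/- Define g(s, t) = (−(σ² + t − s) + √((σ² + t − s)² + 4σ²s))/(2σ²) for s, t ≥ 0 and σ² > 0. Then for every fixed s > 0 the map t ↦ g(s, t) is strictly decreasing on [0, ∞), and for every fixed t ≥ 0 the map s ↦ g(s, t) is strictly increasing on (0, ∞). -/
/-!
Write `g s t = φ_c(x) / (2σ²)` with `x = σ² + t - s`, `c = 4σ²s` and `φ_c(x) = -x + √(x² + c)`.
For `c > 0` the map `φ_c` is strictly decreasing (square both sides of `√(y² + c) < (y - x) + √(x² + c)`),
and `φ_c(x)` is strictly increasing in `c`. Raising `t` raises `x` only; raising `s` lowers `x` and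
raises `c`, and both changes increase `φ_c(x)`.
-/

open Real

lemma strictAnti_neg_add_sqrt_sq_add {c : ℝ} (hc : 0 < c) :
    StrictAnti fun x : ℝ => -x + √(x ^ 2 + c) := by
  intro x y hxy
  have hx : x < √(x ^ 2 + c) := lt_sqrt_of_sq_lt (by linarith)
  have hpos : 0 < y - x + √(x ^ 2 + c) := by linarith [sqrt_nonneg (x ^ 2 + c)]
  have hsq : √(x ^ 2 + c) ^ 2 = x ^ 2 + c := sq_sqrt (by positivity)
  have : √(y ^ 2 + c) < y - x + √(x ^ 2 + c) := by
    rw [sqrt_lt' hpos]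
    nlinarith
  show -y + √(y ^ 2 + c) < -x + √(x ^ 2 + c)
  linarith

/-- Monotonicity of `γ*₁,S3` as a function of the signal power `s = Pa²`
and the interference power `t = Qb²`. -/
theorem stmt_3 (σ2 : ℝ) (hσ : 0 < σ2) (g : ℝ → ℝ → ℝ)
    (hg : ∀ s t : ℝ, g s t =
      (-(σ2 + t - s) + Real.sqrt ((σ2 + t - s) ^ 2 + 4 * σ2 * s)) / (2 * σ2)) :
    (∀ s : ℝ, 0 < s → StrictAntiOn (fun t => g s t) (Set.Ici 0)) ∧
    (∀ t : ℝ, 0 ≤ t → StrictMonoOn (fun s => g s t) (Set.Ioi 0)) := by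
  refine ⟨fun s hs t₁ _ t₂ _ ht => ?_, fun t _ s₁ hs₁ s₂ _ hs => ?_⟩
  · simp only [hg]
    gcongr ?_ / _
    exact strictAnti_neg_add_sqrt_sq_add (by positivity) (by linarith : σ2 + t₁ - s < σ2 + t₂ - s)
  · have hs₁ : (0 : ℝ) < s₁ := hs₁
    simp only [hg]
    gcongr ?_ / _
    calc -(σ2 + t - s₁) + √((σ2 + t - s₁) ^ 2 + 4 * σ2 * s₁)
        < -(σ2 + t - s₂) + √((σ2 + t - s₂) ^ 2 + 4 * σ2 * s₁) :=
          strictAnti_neg_add_sqrt_sq_add (by positivity) (by linarith)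
      _ < -(σ2 + t - s₂) + √((σ2 + t - s₂) ^ 2 + 4 * σ2 * s₂) := by
          gcongr
end

section
/- Let Y = σ² + Qb² − Pa² and γ*₁,S3 = (−Y + √(Y² + 4σ²Pa²))/(2σ²). Then γ*₁,S3 ≥ Pa²/(σ² + Qb²), i.e., the maximum SINR of the interference-suppression scheme 3 is at least UE1's SINR γ*₁,S1 of the non-cooperative scheme 1 that treats interference as noise. -/
/-!
`γ*₁,S3` is the larger root of `σ² γ² + Y γ - P a²`. At `γ = P a² / (σ² + Q b²)` this quadratic
takes the value `-Q b² (P a²)² / (σ² + Q b²)² ≤ 0`, so that point lies below the larger root.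
-/

theorem le_larger_root_of_quadratic_nonpos {a b c t : ℝ} (ha : 0 < a)
    (ht : a * t ^ 2 + b * t + c ≤ 0) :
    t ≤ (-b + √(discrim a b c)) / (2 * a) := by
  have hsq : (2 * a * t + b) ^ 2 ≤ discrim a b c := by
    rw [discrim]
    nlinarith
  have hroot : 2 * a * t + b ≤ √(discrim a b c) :=
    (le_abs_self _).trans (Real.abs_le_sqrt hsq)
  rw [le_div_iff₀ (by positivity)]
  linarith

theorem quadratic_eval_sinr {s q x : ℝ} (hne : s + q ≠ 0) :
    s * (x / (s + q)) ^ 2 + (s + q - x) * (x / (s + q)) + -x = -(q * x ^ 2 / (s + q) ^ 2) := by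
  field_simp
  ring

theorem stmt_5_general (a b P Q σ2 : ℝ)
    (hQ : 0 < Q) (hσ : 0 < σ2)
    (Y γS3 : ℝ)
    (hY : Y = σ2 + Q * b ^ 2 - P * a ^ 2)
    (hγ : γS3 = (-Y + Real.sqrt (Y ^ 2 + 4 * σ2 * P * a ^ 2)) / (2 * σ2)) :
    γS3 ≥ P * a ^ 2 / (σ2 + Q * b ^ 2) := by
  have hdisc : discrim σ2 Y (-(P * a ^ 2)) = Y ^ 2 + 4 * σ2 * P * a ^ 2 := by
    rw [discrim]
    ring
  have hnonpos : σ2 * (P * a ^ 2 / (σ2 + Q * b ^ 2)) ^ 2 + Y * (P * a ^ 2 / (σ2 + Q * b ^ 2))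
      + -(P * a ^ 2) ≤ 0 := by
    rw [hY, quadratic_eval_sinr (by positivity), neg_nonpos]
    positivity
  rw [hγ, ← hdisc]
  exact le_larger_root_of_quadratic_nonpos hσ hnonpos

/-- `γ*₁,S3` is at least the non-cooperative SINR `γ*₁,S1 = P a² / (σ² + Q b²)`. -/
theorem stmt_5 (a b P Q σ2 : ℝ) (ha : 0 < a) (hb : 0 < b) (hP : 0 < P)
    (hQ : 0 < Q) (hσ : 0 < σ2)
    (Y γS3 : ℝ)
    (hY : Y = σ2 + Q * b ^ 2 - P * a ^ 2)
    (hγ : γS3 = (-Y + Real.sqrt (Y ^ 2 + 4 * σ2 * P * a ^ 2)) / (2 * σ2)) :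
    γS3 ≥ P * a ^ 2 / (σ2 + Q * b ^ 2) :=
  stmt_5_general a b P Q σ2 hQ hσ Y γS3 hY hγ
end

section
/- Suppose (v₁, v₂) with v₁, v₂ ≥ 0 is feasible for (P-S4), i.e., (a·v₂ + √Q·b)²/(σ² + a²v₁²) ≥ ρ and v₁² + v₂² ≤ P, and suppose v₁² + v₂² < P. Set δ = (P − v₁² − v₂²)/(ρ + 1), v̂₁ = √(v₁² + δ), v̂₂ = √(v₂² + ρδ). Then v̂₁² + v̂₂² = P, (a·v̂₂ + √Q·b)²/(σ² + a²v̂₁²) > ρ, and v̂₁ > v₁. Consequently, every optimal solution of (P-S4) satisfies v₁² + v₂² = P. -/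
/-!
Moving from an interior feasible point `(v₁, v₂)` along `v₁² ↦ v₁² + δ`, `v₂² ↦ v₂² + ρδ` with
`δ > 0` spends exactly the slack when `δ = (P - v₁² - v₂²)/(ρ + 1)`. This raises the denominator
`σ² + a²v₁²` of the SINR by `a²δ`, while the numerator `(a v₂ + √Q b)²` grows by
`a²ρδ + 2a√Q b (v̂₂ - v₂)`, i.e. by strictly more than `ρ` times that amount, so the SINR constraint
becomes strict and the objective `a²v₁²/σ²` strictly increases. Hence an optimum cannot be interior.
-/

open Real

/-- The SINR at UE1 for UE2's message, with `c = √Q · b`. -/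
noncomputable def sinr (a c σ2 v1 v2 : ℝ) : ℝ := (a * v2 + c) ^ 2 / (σ2 + a ^ 2 * v1 ^ 2)

theorem lt_sqrt_sq_add (x : ℝ) {t : ℝ} (ht : 0 < t) : x < √(x ^ 2 + t) :=
  calc x ≤ |x| := le_abs_self x
    _ = √(x ^ 2) := (sqrt_sq_eq_abs x).symm
    _ < √(x ^ 2 + t) := sqrt_lt_sqrt (sq_nonneg x) (by linarith)

section

variable {a c σ2 ρ P v1 v2 w1 w2 δ : ℝ}

theorem lt_sinr_of_sq_sub_eq (ha : 0 < a) (hc : 0 < c) (hσ : 0 < σ2) (hv2w2 : v2 < w2)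
    (hshift : w2 ^ 2 - v2 ^ 2 = ρ * (w1 ^ 2 - v1 ^ 2)) (hcon : ρ ≤ sinr a c σ2 v1 v2) :
    ρ < sinr a c σ2 w1 w2 := by
  have hcon' : ρ * (σ2 + a ^ 2 * v1 ^ 2) ≤ (a * v2 + c) ^ 2 :=
    (le_div_iff₀ (by positivity)).1 hcon
  have hgain : (a * w2 + c) ^ 2 - (a * v2 + c) ^ 2
      = a ^ 2 * (w2 ^ 2 - v2 ^ 2) + 2 * a * c * (w2 - v2) := by ring
  have hcross : 0 < 2 * a * c * (w2 - v2) := by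
    have := sub_pos.2 hv2w2
    positivity
  rw [sinr, lt_div_iff₀ (by positivity)]
  nlinarith

theorem sqrt_shift_sq_add_sq (hρ : 0 < ρ) (hδ : δ = (P - v1 ^ 2 - v2 ^ 2) / (ρ + 1))
    (hδ0 : 0 < δ) : √(v1 ^ 2 + δ) ^ 2 + √(v2 ^ 2 + ρ * δ) ^ 2 = P := by
  rw [sq_sqrt (by positivity), sq_sqrt (by positivity), hδ]
  field_simp
  ring

theorem lt_sinr_sqrt_shift (ha : 0 < a) (hc : 0 < c) (hσ : 0 < σ2) (hρ : 0 < ρ) (hδ0 : 0 < δ)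
    (hcon : ρ ≤ sinr a c σ2 v1 v2) :
    ρ < sinr a c σ2 √(v1 ^ 2 + δ) √(v2 ^ 2 + ρ * δ) := by
  refine lt_sinr_of_sq_sub_eq ha hc hσ (lt_sqrt_sq_add v2 (by positivity)) ?_ hcon
  rw [sq_sqrt (by positivity), sq_sqrt (by positivity)]
  ring

theorem sq_add_sq_eq_of_forall_sq_le (ha : 0 < a) (hc : 0 < c) (hσ : 0 < σ2) (hρ : 0 < ρ)
    (hw : ρ ≤ sinr a c σ2 w1 w2) (hwP : w1 ^ 2 + w2 ^ 2 ≤ P)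
    (hopt : ∀ u1 u2, 0 ≤ u1 → 0 ≤ u2 → ρ ≤ sinr a c σ2 u1 u2 → u1 ^ 2 + u2 ^ 2 ≤ P →
      u1 ^ 2 ≤ w1 ^ 2) :
    w1 ^ 2 + w2 ^ 2 = P := by
  refine hwP.eq_of_not_lt fun hlt => ?_
  set δ := (P - w1 ^ 2 - w2 ^ 2) / (ρ + 1) with hδ
  have hδ0 : 0 < δ := div_pos (by linarith) (by linarith)
  have hle := hopt _ _ (sqrt_nonneg _) (sqrt_nonneg _)
    (lt_sinr_sqrt_shift ha hc hσ hρ hδ0 hw).le (sqrt_shift_sq_add_sq hρ hδ hδ0).le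
  rw [sq_sqrt (by positivity)] at hle
  linarith

end

theorem stmt_6_general (a b P Q σ2 ρ : ℝ) (ha : 0 < a) (hb : 0 < b)
    (hQ : 0 < Q) (hσ : 0 < σ2) (hρ : 0 < ρ)
    (v1 v2 : ℝ)
    (hcon : (a * v2 + Real.sqrt Q * b) ^ 2 / (σ2 + a ^ 2 * v1 ^ 2) ≥ ρ)
    (hlt : v1 ^ 2 + v2 ^ 2 < P)
    (δ hv1hat hv2hat : ℝ)
    (hδ : δ = (P - v1 ^ 2 - v2 ^ 2) / (ρ + 1))
    (h1 : hv1hat = Real.sqrt (v1 ^ 2 + δ))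
    (h2 : hv2hat = Real.sqrt (v2 ^ 2 + ρ * δ)) :
    (hv1hat ^ 2 + hv2hat ^ 2 = P ∧
     (a * hv2hat + Real.sqrt Q * b) ^ 2 / (σ2 + a ^ 2 * hv1hat ^ 2) > ρ ∧
     hv1hat > v1) ∧
    (∀ w1 w2 : ℝ, 0 ≤ w1 → 0 ≤ w2 →
      (a * w2 + Real.sqrt Q * b) ^ 2 / (σ2 + a ^ 2 * w1 ^ 2) ≥ ρ →
      w1 ^ 2 + w2 ^ 2 ≤ P →
      (∀ u1 u2 : ℝ, 0 ≤ u1 → 0 ≤ u2 →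
        (a * u2 + Real.sqrt Q * b) ^ 2 / (σ2 + a ^ 2 * u1 ^ 2) ≥ ρ →
        u1 ^ 2 + u2 ^ 2 ≤ P →
        a ^ 2 * u1 ^ 2 / σ2 ≤ a ^ 2 * w1 ^ 2 / σ2) →
      w1 ^ 2 + w2 ^ 2 = P) := by
  have hc : 0 < √Q * b := by positivity
  have hδ0 : 0 < δ := hδ ▸ div_pos (by linarith) (by linarith)
  subst h1 h2
  refine ⟨⟨sqrt_shift_sq_add_sq hρ hδ hδ0, lt_sinr_sqrt_shift ha hc hσ hρ hδ0 hcon,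
    lt_sqrt_sq_add v1 hδ0⟩, ?_⟩
  intro w1 w2 _ _ hw hwP hopt
  refine sq_add_sq_eq_of_forall_sq_le ha hc hσ hρ hw hwP fun u1 u2 hu1 hu2 hu huP => ?_
  have hobj := (div_le_div_iff_of_pos_right hσ).1 (hopt u1 u2 hu1 hu2 hu huP)
  exact le_of_mul_le_mul_left hobj (by positivity)

/-- The power constraint of (P-S4) is tight at the optimum: any strictly
interior feasible point can be strictly improved, hence every optimal solution
satisfies `v₁² + v₂² = P`. -/
theorem stmt_6 (a b P Q σ2 ρ : ℝ) (ha : 0 < a) (hb : 0 < b) (hP : 0 < P)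
    (hQ : 0 < Q) (hσ : 0 < σ2) (hρ : 0 < ρ)
    (v1 v2 : ℝ) (hv1 : 0 ≤ v1) (hv2 : 0 ≤ v2)
    (hcon : (a * v2 + Real.sqrt Q * b) ^ 2 / (σ2 + a ^ 2 * v1 ^ 2) ≥ ρ)
    (hpow : v1 ^ 2 + v2 ^ 2 ≤ P)
    (hlt : v1 ^ 2 + v2 ^ 2 < P)
    (δ hv1hat hv2hat : ℝ)
    (hδ : δ = (P - v1 ^ 2 - v2 ^ 2) / (ρ + 1))
    (h1 : hv1hat = Real.sqrt (v1 ^ 2 + δ))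
    (h2 : hv2hat = Real.sqrt (v2 ^ 2 + ρ * δ)) :
    (hv1hat ^ 2 + hv2hat ^ 2 = P ∧
     (a * hv2hat + Real.sqrt Q * b) ^ 2 / (σ2 + a ^ 2 * hv1hat ^ 2) > ρ ∧
     hv1hat > v1) ∧
    (∀ w1 w2 : ℝ, 0 ≤ w1 → 0 ≤ w2 →
      (a * w2 + Real.sqrt Q * b) ^ 2 / (σ2 + a ^ 2 * w1 ^ 2) ≥ ρ →
      w1 ^ 2 + w2 ^ 2 ≤ P →
      (∀ u1 u2 : ℝ, 0 ≤ u1 → 0 ≤ u2 →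
        (a * u2 + Real.sqrt Q * b) ^ 2 / (σ2 + a ^ 2 * u1 ^ 2) ≥ ρ →
        u1 ^ 2 + u2 ^ 2 ≤ P →
        a ^ 2 * u1 ^ 2 / σ2 ≤ a ^ 2 * w1 ^ 2 / σ2) →
      w1 ^ 2 + w2 ^ 2 = P) :=
  stmt_6_general a b P Q σ2 ρ ha hb hQ hσ hρ v1 v2 hcon hlt δ hv1hat hv2hat hδ h1 h2
end

section
/- Suppose Qb²/(σ² + Pa²) < ρ. Let G(v) = (1+ρ)a²v² + 2√Q·a·b·v + Qb² − ρσ² − Pρa² and A = Pρ(1+ρ)a² + ρ(1+ρ)σ² − ρQb². Then A > 0, the quadratic G has exactly one positive root, and this root equals v₂* = (√A − √Q·b)/(a(1+ρ)); moreover F(v₂*) = ρ, where F(v) = (a·v + √Q·b)²/(σ² + a²(P − v²)). -/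
/-!
Multiplying by `1 + ρ` completes the square: `(1 + ρ) G(v) = (a (1 + ρ) v + √Q b)² - A`.
Under `F(0) < ρ` one has `Q b² < A`, so the linear term `a (1 + ρ) v + √Q b`, which is positive
for `v > 0`, must equal `√A`; this gives the unique positive root `v₂*`. Finally
`F(v) = ρ` is `G(v) = 0` with the denominator of `F` cleared, and that denominator cannot vanish
at a root because the numerator `(a v + √Q b)²` does not.
-/

lemma mul_sq_lt_of_lt_mul {a b P Q σ2 ρ : ℝ} (hρ : 0 < 1 + ρ)
    (h : Q * b ^ 2 < ρ * (σ2 + P * a ^ 2)) :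
    Q * b ^ 2 < P * ρ * (1 + ρ) * a ^ 2 + ρ * (1 + ρ) * σ2 - ρ * Q * b ^ 2 := by
  nlinarith [mul_pos hρ (sub_pos.2 h)]

lemma quadratic_eq_zero_iff_sq_eq_sq {a b P Q σ2 ρ t s : ℝ} (hρ : 1 + ρ ≠ 0)
    (ht : t ^ 2 = Q)
    (hs : s ^ 2 = P * ρ * (1 + ρ) * a ^ 2 + ρ * (1 + ρ) * σ2 - ρ * Q * b ^ 2) (v : ℝ) :
    (1 + ρ) * a ^ 2 * v ^ 2 + 2 * t * a * b * v + Q * b ^ 2 - ρ * σ2 - P * ρ * a ^ 2 = 0 ↔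
      (a * (1 + ρ) * v + t * b) ^ 2 = s ^ 2 := by
  rw [← mul_right_inj' hρ, mul_zero, ← sub_eq_zero (a := _ ^ 2)]
  constructor <;> intro h
  · linear_combination h + b ^ 2 * ht - hs
  · linear_combination h - b ^ 2 * ht + hs

lemma pos_and_sq_eq_sq_iff {c e s x : ℝ} (hc : 0 < c) (he : 0 ≤ e) (hes : e < s) :
    0 < x ∧ (c * x + e) ^ 2 = s ^ 2 ↔ x = (s - e) / c := by
  rw [eq_div_iff hc.ne']
  constructor
  · rintro ⟨hx, hsq⟩
    have := (sq_eq_sq₀ (by positivity) (he.trans hes.le)).1 hsq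
    linarith
  · intro hx
    refine ⟨pos_of_mul_pos_right (a := c) ?_ hc.le, by rw [mul_comm, hx, sub_add_cancel]⟩
    linarith

lemma sinr_eq_of_quadratic_eq_zero {a b P Q σ2 ρ t v : ℝ} (hv : 0 < a * v + t * b)
    (ht : t ^ 2 = Q)
    (hG : (1 + ρ) * a ^ 2 * v ^ 2 + 2 * t * a * b * v + Q * b ^ 2 - ρ * σ2 - P * ρ * a ^ 2 = 0) :
    (a * v + t * b) ^ 2 / (σ2 + a ^ 2 * (P - v ^ 2)) = ρ := by
  have hnum : (a * v + t * b) ^ 2 = ρ * (σ2 + a ^ 2 * (P - v ^ 2)) := by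
    linear_combination hG + b ^ 2 * ht
  have hden : σ2 + a ^ 2 * (P - v ^ 2) ≠ 0 := by
    intro h
    rw [h, mul_zero] at hnum
    exact (pow_pos hv 2).ne' hnum
  rw [div_eq_iff hden, hnum]

/-- When `F(0) < ρ`, the quadratic `G` has a unique positive root, given in
closed form, and `F` equals `ρ` at this root. -/
theorem stmt_9 (a b P Q σ2 ρ : ℝ) (ha : 0 < a) (hb : 0 < b) (hP : 0 < P)
    (hQ : 0 < Q) (hσ : 0 < σ2) (hρ : 0 < ρ)
    (hF0 : Q * b ^ 2 / (σ2 + P * a ^ 2) < ρ)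
    (G F : ℝ → ℝ) (A v2star : ℝ)
    (hG : ∀ v : ℝ, G v = (1 + ρ) * a ^ 2 * v ^ 2 + 2 * Real.sqrt Q * a * b * v +
      Q * b ^ 2 - ρ * σ2 - P * ρ * a ^ 2)
    (hA : A = P * ρ * (1 + ρ) * a ^ 2 + ρ * (1 + ρ) * σ2 - ρ * Q * b ^ 2)
    (hv2 : v2star = (Real.sqrt A - Real.sqrt Q * b) / (a * (1 + ρ)))
    (hFdef : ∀ v : ℝ, F v =
      (a * v + Real.sqrt Q * b) ^ 2 / (σ2 + a ^ 2 * (P - v ^ 2))) :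
    A > 0 ∧
    (∃! v : ℝ, 0 < v ∧ G v = 0) ∧
    (0 < v2star ∧ G v2star = 0) ∧
    F v2star = ρ := by
  have hQb : Q * b ^ 2 < ρ * (σ2 + P * a ^ 2) := (div_lt_iff₀ (by positivity)).1 hF0
  have hQbA : Q * b ^ 2 < A := hA ▸ mul_sq_lt_of_lt_mul (by linarith) hQb
  have hApos : 0 < A := lt_of_le_of_lt (by positivity) hQbA
  have ht : √Q ^ 2 = Q := Real.sq_sqrt hQ.le
  have htb : 0 ≤ √Q * b := by positivity
  have htbA : √Q * b < √A :=
    lt_of_pow_lt_pow_left₀ 2 (Real.sqrt_nonneg A) (by rwa [mul_pow, ht, Real.sq_sqrt hApos.le])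
  have hs : √A ^ 2 = P * ρ * (1 + ρ) * a ^ 2 + ρ * (1 + ρ) * σ2 - ρ * Q * b ^ 2 :=
    hA ▸ Real.sq_sqrt hApos.le
  have hroot : ∀ v, 0 < v ∧ G v = 0 ↔ v = v2star := fun v => by
    rw [hG, quadratic_eq_zero_iff_sq_eq_sq (by linarith) ht hs,
      pos_and_sq_eq_sq_iff (by positivity) htb htbA, hv2]
  have hv : 0 < v2star ∧ G v2star = 0 := (hroot v2star).2 rfl
  refine ⟨hApos, ⟨v2star, hv, fun v h => (hroot v).1 h⟩, hv, ?_⟩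
  rw [hFdef, sinr_eq_of_quadratic_eq_zero (add_pos_of_pos_of_nonneg (mul_pos ha hv.1) htb) ht
    ((hG v2star).symm.trans hv.2)]
end

section
/- Suppose (√P·a + √Q·b)² ≥ ρσ² (feasibility of (P-S4)). Then the supremum of a²v₁²/σ² over all v₁, v₂ ≥ 0 with (a·v₂ + √Q·b)²/(σ² + a²v₁²) ≥ ρ and v₁² + v₂² ≤ P equals γ*₁,S4, where γ*₁,S4 = Pa²/σ² if Qb²/(σ² + Pa²) ≥ ρ, and γ*₁,S4 = a²(P − v₂*²)/σ² with v₂* = (√A − √Q·b)/(a(1+ρ)), A = Pρ(1+ρ)a² + ρ(1+ρ)σ² − ρQb², otherwise; in the first case the supremum is attained at (v₁, v₂) = (√P, 0) and in the second case at (√(P − v₂*²), v₂*). -/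
/-!
Write `q = √Q·b`. With the power budget tight (`v₁² = P - v₂²`), the SIC constraint reads
`g(v₂) ≥ ρ(σ² + a²P)` for `g(v) = (a v + q)² + ρ a² v²` (`tightSicLhs`), which is strictly
increasing on `[0, ∞)`. Raising `v₂` to `√(P - v₁²)` only helps the constraint, so every
feasible `v₁` has `g(√(P - v₁²)) ≥ ρ(σ² + a²P) = g(v₂*)`, i.e. `v₁² ≤ P - v₂*²`, where `v₂*` is
the nonnegative root given by the quadratic formula. If instead `q² ≥ ρ(σ² + a²P)`, then
`v₂ = 0` already satisfies the constraint and only `v₁² ≤ P` binds. Feasibility of (P-S4) is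
feasibility of `(v₁, v₂) = (0, √P)`, which forces `v₂*² ≤ P`.
-/

open Real Set

def tightSicLhs (a q ρ v : ℝ) : ℝ := (a * v + q) ^ 2 + ρ * a ^ 2 * v ^ 2

def sicRateSet (a q P σ2 ρ : ℝ) : Set ℝ :=
  {x | ∃ v1 v2 : ℝ, 0 ≤ v1 ∧ 0 ≤ v2 ∧ (a * v2 + q) ^ 2 / (σ2 + a ^ 2 * v1 ^ 2) ≥ ρ ∧
    v1 ^ 2 + v2 ^ 2 ≤ P ∧ x = a ^ 2 * v1 ^ 2 / σ2}

section

variable {a q ρ : ℝ}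

theorem strictMonoOn_tightSicLhs (ha : 0 < a) (hq : 0 ≤ q) (hρ : 0 ≤ ρ) :
    StrictMonoOn (tightSicLhs a q ρ) (Ici 0) := by
  intro v (hv : 0 ≤ v) w _ hvw
  have h₁ : (a * v + q) ^ 2 < (a * w + q) ^ 2 :=
    pow_lt_pow_left₀ (by gcongr) (by positivity) two_ne_zero
  have h₂ : ρ * a ^ 2 * v ^ 2 ≤ ρ * a ^ 2 * w ^ 2 := by gcongr
  unfold tightSicLhs
  linarith

theorem tightSicLhs_quadratic_root {A c : ℝ} (ha : 0 < a) (hρ : 0 ≤ ρ) (hA : 0 ≤ A)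
    (hAc : A + ρ * q ^ 2 = ρ * (1 + ρ) * c) :
    tightSicLhs a q ρ ((√A - q) / (a * (1 + ρ))) = ρ * c := by
  have hρ₁ : 0 < 1 + ρ := by linarith
  set v := (√A - q) / (a * (1 + ρ))
  have hsq : (1 + ρ) * tightSicLhs a q ρ v = (a * (1 + ρ) * v + q) ^ 2 + ρ * q ^ 2 := by
    unfold tightSicLhs; ring
  have hv : a * (1 + ρ) * v + q = √A := by
    simp only [v]; field_simp; ring
  apply mul_left_cancel₀ hρ₁.ne'
  rw [hsq, hv, sq_sqrt hA]
  linear_combination hAc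

theorem quadratic_root_nonneg {A : ℝ} (ha : 0 < a) (hρ : 0 ≤ ρ) (hqA : q ^ 2 ≤ A) :
    0 ≤ (√A - q) / (a * (1 + ρ)) :=
  div_nonneg (sub_nonneg.2 (le_sqrt_of_sq_le hqA)) (mul_nonneg ha.le (by linarith))

theorem sq_le_sub_sq_of_tightSicLhs_eq {P σ2 v v1 v2 : ℝ} (ha : 0 < a) (hq : 0 ≤ q)
    (hρ : 0 ≤ ρ) (hv : 0 ≤ v) (hroot : tightSicLhs a q ρ v = ρ * (σ2 + a ^ 2 * P))
    (hv2 : 0 ≤ v2) (hsinr : ρ * (σ2 + a ^ 2 * v1 ^ 2) ≤ (a * v2 + q) ^ 2)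
    (hsum : v1 ^ 2 + v2 ^ 2 ≤ P) : v1 ^ 2 ≤ P - v ^ 2 := by
  set w := √(P - v1 ^ 2)
  have hw : 0 ≤ w := sqrt_nonneg _
  have hw2 : w ^ 2 = P - v1 ^ 2 := sq_sqrt (by nlinarith)
  have hv2w : v2 ≤ w := le_sqrt_of_sq_le (by linarith)
  have hgw : tightSicLhs a q ρ v ≤ tightSicLhs a q ρ w := by
    have : (a * v2 + q) ^ 2 ≤ (a * w + q) ^ 2 := by gcongr
    rw [hroot, tightSicLhs, mul_assoc ρ, hw2]
    linarith
  have hvw : v ≤ w := ((strictMonoOn_tightSicLhs ha hq hρ).le_iff_le hv hw).1 hgw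
  nlinarith [pow_le_pow_left₀ hv hvw 2]

theorem sinr_ge_iff {σ2 v1 v2 : ℝ} (hσ : 0 < σ2) :
    (a * v2 + q) ^ 2 / (σ2 + a ^ 2 * v1 ^ 2) ≥ ρ ↔
      ρ * (σ2 + a ^ 2 * v1 ^ 2) ≤ (a * v2 + q) ^ 2 := by
  rw [ge_iff_le, le_div_iff₀ (by positivity), mul_comm]

theorem isGreatest_sicRateSet {P σ2 u1 u2 : ℝ} (hσ : 0 < σ2)
    (hu : 0 ≤ u1 ∧ 0 ≤ u2 ∧ (a * u2 + q) ^ 2 / (σ2 + a ^ 2 * u1 ^ 2) ≥ ρ ∧ u1 ^ 2 + u2 ^ 2 ≤ P)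
    (hmax : ∀ v1 v2, 0 ≤ v2 → ρ * (σ2 + a ^ 2 * v1 ^ 2) ≤ (a * v2 + q) ^ 2 →
      v1 ^ 2 + v2 ^ 2 ≤ P → v1 ^ 2 ≤ u1 ^ 2) :
    IsGreatest (sicRateSet a q P σ2 ρ) (a ^ 2 * u1 ^ 2 / σ2) := by
  refine ⟨⟨u1, u2, hu.1, hu.2.1, hu.2.2.1, hu.2.2.2, rfl⟩, ?_⟩
  rintro _ ⟨v1, v2, -, hv2, hsinr, hsum, rfl⟩
  have := hmax v1 v2 hv2 ((sinr_ge_iff hσ).1 hsinr) hsum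
  gcongr

theorem sq_le_of_tightSicLhs_eq {P σ2 v : ℝ} (ha : 0 < a) (hq : 0 ≤ q) (hρ : 0 ≤ ρ)
    (hP : 0 ≤ P) (hv : 0 ≤ v) (hroot : tightSicLhs a q ρ v = ρ * (σ2 + a ^ 2 * P))
    (hfeas : (√P * a + q) ^ 2 ≥ ρ * σ2) : v ^ 2 ≤ P := by
  have := sq_le_sub_sq_of_tightSicLhs_eq (v1 := 0) ha hq hρ hv hroot (sqrt_nonneg P)
    (by linarith) (by simp [sq_sqrt hP])
  linarith

theorem isGreatest_sicRateSet_of_le_sq {P σ2 : ℝ} (hσ : 0 < σ2) (hP : 0 ≤ P)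
    (hc : ρ * (σ2 + a ^ 2 * P) ≤ q ^ 2) :
    IsGreatest (sicRateSet a q P σ2 ρ) (P * a ^ 2 / σ2) ∧
      (0 ≤ √P ∧ (0 : ℝ) ≤ 0 ∧ (a * 0 + q) ^ 2 / (σ2 + a ^ 2 * √P ^ 2) ≥ ρ ∧
        √P ^ 2 + 0 ^ 2 ≤ P ∧ a ^ 2 * √P ^ 2 / σ2 = P * a ^ 2 / σ2) := by
  have hPsq : √P ^ 2 = P := sq_sqrt hP
  have hu : 0 ≤ √P ∧ (0 : ℝ) ≤ 0 ∧ (a * 0 + q) ^ 2 / (σ2 + a ^ 2 * √P ^ 2) ≥ ρ ∧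
      √P ^ 2 + 0 ^ 2 ≤ P :=
    ⟨sqrt_nonneg _, le_rfl, (sinr_ge_iff hσ).2 (by rwa [mul_zero, zero_add, hPsq]),
      by simp [hPsq]⟩
  have hval : a ^ 2 * √P ^ 2 / σ2 = P * a ^ 2 / σ2 := by rw [hPsq, mul_comm]
  refine ⟨hval ▸ isGreatest_sicRateSet hσ hu fun v1 v2 _ _ hsum => ?_,
    hu.1, hu.2.1, hu.2.2.1, hu.2.2.2, hval⟩
  nlinarith

theorem isGreatest_sicRateSet_of_tightSicLhs_eq {P σ2 v : ℝ} (ha : 0 < a) (hq : 0 ≤ q)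
    (hρ : 0 ≤ ρ) (hσ : 0 < σ2) (hP : 0 ≤ P) (hv : 0 ≤ v)
    (hroot : tightSicLhs a q ρ v = ρ * (σ2 + a ^ 2 * P))
    (hfeas : (√P * a + q) ^ 2 ≥ ρ * σ2) :
    IsGreatest (sicRateSet a q P σ2 ρ) (a ^ 2 * (P - v ^ 2) / σ2) ∧
      (0 ≤ √(P - v ^ 2) ∧ 0 ≤ v ∧
        (a * v + q) ^ 2 / (σ2 + a ^ 2 * √(P - v ^ 2) ^ 2) ≥ ρ ∧
        √(P - v ^ 2) ^ 2 + v ^ 2 ≤ P ∧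
        a ^ 2 * √(P - v ^ 2) ^ 2 / σ2 = a ^ 2 * (P - v ^ 2) / σ2) := by
  have hw2 : √(P - v ^ 2) ^ 2 = P - v ^ 2 :=
    sq_sqrt (sub_nonneg.2 (sq_le_of_tightSicLhs_eq ha hq hρ hP hv hroot hfeas))
  have hu : 0 ≤ √(P - v ^ 2) ∧ 0 ≤ v ∧
      (a * v + q) ^ 2 / (σ2 + a ^ 2 * √(P - v ^ 2) ^ 2) ≥ ρ ∧
      √(P - v ^ 2) ^ 2 + v ^ 2 ≤ P := by
    refine ⟨sqrt_nonneg _, hv, (sinr_ge_iff hσ).2 ?_, by rw [hw2]; linarith⟩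
    rw [hw2]
    unfold tightSicLhs at hroot
    linarith
  have hval : a ^ 2 * √(P - v ^ 2) ^ 2 / σ2 = a ^ 2 * (P - v ^ 2) / σ2 := by rw [hw2]
  refine ⟨hval ▸ isGreatest_sicRateSet hσ hu fun v1 v2 hv2 hsinr hsum => ?_,
    hu.1, hu.2.1, hu.2.2.1, hu.2.2.2, hval⟩
  rw [hw2]
  exact sq_le_sub_sq_of_tightSicLhs_eq ha hq hρ hv hroot hv2 hsinr hsum

end

/-- Optimal value of problem (P-S4) (equation (18) of the paper), together with
the points attaining it in each case. -/
theorem stmt_11 (a b P Q σ2 ρ : ℝ) (ha : 0 < a) (hb : 0 < b) (hP : 0 < P)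
    (hQ : 0 < Q) (hσ : 0 < σ2) (hρ : 0 < ρ)
    (hfeas : (Real.sqrt P * a + Real.sqrt Q * b) ^ 2 ≥ ρ * σ2)
    (A v2star γS4 : ℝ)
    (hA : A = P * ρ * (1 + ρ) * a ^ 2 + ρ * (1 + ρ) * σ2 - ρ * Q * b ^ 2)
    (hv2 : v2star = (Real.sqrt A - Real.sqrt Q * b) / (a * (1 + ρ)))
    (hγ : γS4 = if Q * b ^ 2 / (σ2 + P * a ^ 2) ≥ ρ
      then P * a ^ 2 / σ2
      else a ^ 2 * (P - v2star ^ 2) / σ2) :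
    IsGreatest {x : ℝ | ∃ v1 v2 : ℝ, 0 ≤ v1 ∧ 0 ≤ v2 ∧
        (a * v2 + Real.sqrt Q * b) ^ 2 / (σ2 + a ^ 2 * v1 ^ 2) ≥ ρ ∧
        v1 ^ 2 + v2 ^ 2 ≤ P ∧ x = a ^ 2 * v1 ^ 2 / σ2} γS4 ∧
    (Q * b ^ 2 / (σ2 + P * a ^ 2) ≥ ρ →
      (0 ≤ Real.sqrt P ∧ (0:ℝ) ≤ 0 ∧
       (a * 0 + Real.sqrt Q * b) ^ 2 / (σ2 + a ^ 2 * Real.sqrt P ^ 2) ≥ ρ ∧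
       Real.sqrt P ^ 2 + 0 ^ 2 ≤ P ∧
       a ^ 2 * Real.sqrt P ^ 2 / σ2 = γS4)) ∧
    (¬ (Q * b ^ 2 / (σ2 + P * a ^ 2) ≥ ρ) →
      (0 ≤ Real.sqrt (P - v2star ^ 2) ∧ 0 ≤ v2star ∧
       (a * v2star + Real.sqrt Q * b) ^ 2 /
         (σ2 + a ^ 2 * Real.sqrt (P - v2star ^ 2) ^ 2) ≥ ρ ∧
       Real.sqrt (P - v2star ^ 2) ^ 2 + v2star ^ 2 ≤ P ∧
       a ^ 2 * Real.sqrt (P - v2star ^ 2) ^ 2 / σ2 = γS4)) := by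
  set q := √Q * b with hq_def
  have hq : 0 ≤ q := by positivity
  have hq2 : q ^ 2 = Q * b ^ 2 := by rw [hq_def, mul_pow, sq_sqrt hQ.le]
  rw [← hq2] at hγ ⊢
  by_cases hc : q ^ 2 / (σ2 + P * a ^ 2) ≥ ρ
  · have hqρ : ρ * (σ2 + a ^ 2 * P) ≤ q ^ 2 := by
      rw [ge_iff_le, le_div_iff₀ (by positivity)] at hc
      linarith
    rw [hγ, if_pos hc]
    obtain ⟨hmax, hu⟩ := isGreatest_sicRateSet_of_le_sq hσ hP.le hqρ
    exact ⟨hmax, fun _ => hu, fun h => absurd hc h⟩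
  · have hqρ : q ^ 2 < ρ * (σ2 + a ^ 2 * P) := by
      rw [ge_iff_le, not_le, div_lt_iff₀ (by positivity)] at hc
      linarith
    rw [hγ, if_neg hc]
    have hAq : A + ρ * q ^ 2 = ρ * (1 + ρ) * (σ2 + a ^ 2 * P) := by rw [hA, hq2]; ring
    have hqA : q ^ 2 ≤ A := by nlinarith
    have hroot : tightSicLhs a q ρ v2star = ρ * (σ2 + a ^ 2 * P) :=
      hv2 ▸ tightSicLhs_quadratic_root ha hρ.le ((sq_nonneg q).trans hqA) hAq
    have hv : 0 ≤ v2star := hv2 ▸ quadratic_root_nonneg ha hρ.le hqA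
    obtain ⟨hmax, hu⟩ :=
      isGreatest_sicRateSet_of_tightSicLhs_eq ha hq hρ.le hσ hP.le hv hroot hfeas
    exact ⟨hmax, fun h => absurd h hc, fun _ => hu⟩
end

section
/- For t ≥ 0 satisfying (√(Pa²) + √t)² ≥ ρσ², define h(t) = Pa²/σ² if t ≥ ρ(σ² + Pa²), and h(t) = a²(P − v₂*(t)²)/σ² with v₂*(t) = (√(Pρ(1+ρ)a² + ρ(1+ρ)σ² − ρt) − √t)/(a(1+ρ)) otherwise. Then h is non-decreasing in t on its domain, i.e., UE1's maximum receive SINR under the proposed cooperative NOMA scheme 4 is non-decreasing in the interference power t = Qb². -/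
/-!
Below the threshold `T = ρ (σ² + P a²)` the numerator `√(C - ρ t) - √t` of `v₂*(t)`, where
`C = ρ (1 + ρ) (P a² + σ²) = (1 + ρ) T`, is nonnegative (since `t ≤ C - ρ t` there) and
decreasing, so `v₂*(t)²` decreases and `h` increases. Below `T`, `h` never exceeds its constant
value `P a² / σ²` above `T`.
-/

open Real

theorem monotone_ite_of_monotoneOn_Iio {α β : Type*} [LinearOrder α] [Preorder β]
    {f : α → β} {c : α} {m : β} (hf : MonotoneOn f (Set.Iio c)) (hfm : ∀ x < c, f x ≤ m) :
    Monotone fun x => if c ≤ x then m else f x := by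
  intro x y hxy
  by_cases hy : c ≤ y
  · by_cases hx : c ≤ x
    · simp only [hx, hy, if_true, le_refl]
    · simp only [hx, hy, if_true, if_false]
      exact hfm x (not_le.mp hx)
  · have hx : ¬c ≤ x := fun hx => hy (hx.trans hxy)
    simp only [hx, hy, if_false]
    exact hf (not_le.mp hx) (not_le.mp hy) hxy

theorem antitone_sqrt_sub_sub_sqrt {ρ : ℝ} (hρ : 0 ≤ ρ) (C : ℝ) :
    Antitone fun t => √(C - ρ * t) - √t := by
  intro x y hxy
  have h_left : √(C - ρ * y) ≤ √(C - ρ * x) :=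
    sqrt_le_sqrt (by nlinarith)
  have h_right : √x ≤ √y := sqrt_le_sqrt hxy
  linarith

theorem antitoneOn_sq_sqrt_sub_sub_sqrt_div {ρ : ℝ} (hρ : 0 ≤ ρ) (C d : ℝ) :
    AntitoneOn (fun t => ((√(C - ρ * t) - √t) / d) ^ 2) {t | t ≤ C - ρ * t} := by
  intro x _ y hy hxy
  have hy_nonneg : 0 ≤ √(C - ρ * y) - √y := sub_nonneg.mpr (sqrt_le_sqrt hy)
  simp only [div_pow]
  exact div_le_div_of_nonneg_right
    (pow_le_pow_left₀ hy_nonneg (antitone_sqrt_sub_sub_sqrt hρ C hxy) 2) (sq_nonneg d)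

theorem stmt_13_general (a P σ2 ρ : ℝ) (hσ : 0 < σ2)
    (hρ : 0 < ρ)
    (v2star h : ℝ → ℝ)
    (hv2 : ∀ t : ℝ, v2star t =
      (Real.sqrt (P * ρ * (1 + ρ) * a ^ 2 + ρ * (1 + ρ) * σ2 - ρ * t) -
        Real.sqrt t) / (a * (1 + ρ)))
    (hh : ∀ t : ℝ, h t =
      if t ≥ ρ * (σ2 + P * a ^ 2)
      then P * a ^ 2 / σ2
      else a ^ 2 * (P - (v2star t) ^ 2) / σ2) :
    MonotoneOn h {t : ℝ | 0 ≤ t ∧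
      (Real.sqrt (P * a ^ 2) + Real.sqrt t) ^ 2 ≥ ρ * σ2} := by
  set T := ρ * (σ2 + P * a ^ 2)
  have h_below : Set.Iio T ⊆
      {t | t ≤ P * ρ * (1 + ρ) * a ^ 2 + ρ * (1 + ρ) * σ2 - ρ * t} := by
    intro t ht
    have : 0 ≤ (1 + ρ) * (T - t) := mul_nonneg (by linarith) (sub_nonneg.mpr (le_of_lt ht))
    show t ≤ _
    linarith
  have hv_sq : AntitoneOn (fun t => v2star t ^ 2) (Set.Iio T) := by
    simp only [hv2]
    exact (antitoneOn_sq_sqrt_sub_sub_sqrt_div hρ.le _ _).mono h_below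
  obtain rfl : h = fun t => if T ≤ t then P * a ^ 2 / σ2 else a ^ 2 * (P - v2star t ^ 2) / σ2 :=
    funext hh
  refine (monotone_ite_of_monotoneOn_Iio ?_ fun t _ => ?_).monotoneOn _
  · intro x hx y hy hxy
    have : v2star y ^ 2 ≤ v2star x ^ 2 := hv_sq hx hy hxy
    dsimp only
    gcongr
  · rw [mul_comm P]
    gcongr
    exact sub_le_self P (sq_nonneg _)

/-- UE1's maximum receive SINR under scheme 4 is non-decreasing in the
interference power `t = Qb²` on the feasibility domain. -/
theorem stmt_13 (a P σ2 ρ : ℝ) (ha : 0 < a) (hP : 0 < P) (hσ : 0 < σ2)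
    (hρ : 0 < ρ)
    (v2star h : ℝ → ℝ)
    (hv2 : ∀ t : ℝ, v2star t =
      (Real.sqrt (P * ρ * (1 + ρ) * a ^ 2 + ρ * (1 + ρ) * σ2 - ρ * t) -
        Real.sqrt t) / (a * (1 + ρ)))
    (hh : ∀ t : ℝ, h t =
      if t ≥ ρ * (σ2 + P * a ^ 2)
      then P * a ^ 2 / σ2
      else a ^ 2 * (P - (v2star t) ^ 2) / σ2) :
    MonotoneOn h {t : ℝ | 0 ≤ t ∧
      (Real.sqrt (P * a ^ 2) + Real.sqrt t) ^ 2 ≥ ρ * σ2} :=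
  stmt_13_general a P σ2 ρ hσ hρ v2star h hv2 hh
end

section
/- Suppose Qb² ≥ ρσ² (so scheme 2 is feasible). Then (√P·a + √Q·b)² ≥ ρσ² (so scheme 4 is feasible), and γ*₁,S4 ≥ γ*₁,S2, where γ*₁,S2 = Qb²/(ρσ²) − 1 if Qb²/(σ² + Pa²) ≤ ρ and γ*₁,S2 = Pa²/σ² otherwise, and γ*₁,S4 = Pa²/σ² if Qb²/(σ² + Pa²) ≥ ρ and γ*₁,S4 = a²(P − v₂*²)/σ² with v₂* = (√(Pρ(1+ρ)a² + ρ(1+ρ)σ² − ρQb²) − √Q·b)/(a(1+ρ)) otherwise. -/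
/-!
Write `q = √Q·b` and `t = a·v₂*`. Then `t` is the nonnegative root of
`(q + t)² = ρ(a²(P - v₂²) + σ²)`, i.e. of the decoding constraint of scheme 4 met with equality,
so `ρσ²(1 + γ*₁,S4) = (q + t)² ≥ q² = ρσ²(1 + γ*₁,S2)`. In the remaining cases both schemes
give `Pa²/σ²`.
-/

lemma sq_le_sqrt_mul_add_sq {P Q a b : ℝ} (hQ : 0 ≤ Q) (ha : 0 ≤ a) (hb : 0 ≤ b) :
    Q * b ^ 2 ≤ (√P * a + √Q * b) ^ 2 := by
  have hqb : (√Q * b) ^ 2 = Q * b ^ 2 := by rw [mul_pow, Real.sq_sqrt hQ]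
  rw [← hqb]
  gcongr
  exact le_add_of_nonneg_left (by positivity)

lemma add_sq_eq_mul_sub_sq {ρ q R s t : ℝ} (hρ : 1 + ρ ≠ 0)
    (hs : s ^ 2 = ρ * (1 + ρ) * R - ρ * q ^ 2) (ht : t * (1 + ρ) = s - q) :
    (q + t) ^ 2 = ρ * (R - t ^ 2) := by
  apply mul_left_cancel₀ (pow_ne_zero 2 hρ)
  linear_combination (1 + ρ) * hs + (1 + ρ) * (t * (1 + ρ) + s + q) * ht

lemma div_sub_one_le_of_add_sq_eq {ρ σ2 q t A : ℝ} (hρ : 0 < ρ) (hσ : 0 < σ2) (hq : 0 ≤ q)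
    (ht : 0 ≤ t) (hroot : (q + t) ^ 2 = ρ * (A + σ2)) :
    q ^ 2 / (ρ * σ2) - 1 ≤ A / σ2 :=
  calc q ^ 2 / (ρ * σ2) - 1 ≤ (q + t) ^ 2 / (ρ * σ2) - 1 := by gcongr; linarith
    _ = A / σ2 := by rw [hroot]; field_simp; ring

/-- If scheme 2 is feasible then scheme 4 is feasible, and the proposed
cooperative NOMA scheme 4 achieves an SINR at least that of scheme 2. -/
theorem stmt_14 (a b P Q σ2 ρ : ℝ) (ha : 0 < a) (hb : 0 < b) (hP : 0 < P)
    (hQ : 0 < Q) (hσ : 0 < σ2) (hρ : 0 < ρ)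
    (hfeas2 : Q * b ^ 2 ≥ ρ * σ2)
    (γS2 γS4 v2star : ℝ)
    (hγ2 : γS2 = if Q * b ^ 2 / (σ2 + P * a ^ 2) ≤ ρ
      then Q * b ^ 2 / (ρ * σ2) - 1
      else P * a ^ 2 / σ2)
    (hv2 : v2star =
      (Real.sqrt (P * ρ * (1 + ρ) * a ^ 2 + ρ * (1 + ρ) * σ2 - ρ * Q * b ^ 2) -
        Real.sqrt Q * b) / (a * (1 + ρ)))
    (hγ4 : γS4 = if Q * b ^ 2 / (σ2 + P * a ^ 2) ≥ ρ
      then P * a ^ 2 / σ2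
      else a ^ 2 * (P - v2star ^ 2) / σ2) :
    (Real.sqrt P * a + Real.sqrt Q * b) ^ 2 ≥ ρ * σ2 ∧ γS4 ≥ γS2 := by
  refine ⟨hfeas2.trans (sq_le_sqrt_mul_add_sq (P := P) hQ.le ha.le hb.le), ?_⟩
  set q := √Q * b
  have hq : 0 ≤ q := by positivity
  have hq2 : Q * b ^ 2 = q ^ 2 := by rw [mul_pow, Real.sq_sqrt hQ.le]
  have hR : 0 < σ2 + P * a ^ 2 := by positivity
  rcases lt_trichotomy (Q * b ^ 2 / (σ2 + P * a ^ 2)) ρ with hlt | heq | hgt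
  · rw [hγ2, if_pos hlt.le, hγ4, if_neg hlt.not_ge, hq2]
    rw [div_lt_iff₀ hR, hq2] at hlt
    set s := √(P * ρ * (1 + ρ) * a ^ 2 + ρ * (1 + ρ) * σ2 - ρ * Q * b ^ 2)
    have hs : s ^ 2 = ρ * (1 + ρ) * (P * a ^ 2 + σ2) - ρ * q ^ 2 := by
      rw [Real.sq_sqrt (by nlinarith)]; linear_combination -ρ * hq2
    have hqs : q ≤ s := Real.le_sqrt_of_sq_le (by nlinarith)
    have ht : a * v2star * (1 + ρ) = s - q := by rw [hv2]; field_simp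
    have ht0 : 0 ≤ a * v2star := by nlinarith
    have hroot := add_sq_eq_mul_sub_sq (by positivity) hs ht
    exact div_sub_one_le_of_add_sq_eq hρ hσ hq ht0 (by rw [hroot]; ring)
  · rw [hγ2, if_pos heq.le, hγ4, if_pos heq.ge, hq2]
    rw [div_eq_iff hR.ne', hq2] at heq
    exact div_sub_one_le_of_add_sq_eq hρ hσ hq le_rfl (by rw [add_zero, heq]; ring)
  · rw [hγ2, if_neg hgt.not_ge, hγ4, if_pos hgt.le]
end

section
/- Let α = Pa²/σ² > 0 and β = Qb²/σ² > 0, and define ξ = ((1 + α + β) − √((1 − α + β)² + 4α))/(2α). Then 0 < ξ < 1, and α(1 − ξ) = γ*₁,S3/1 where γ*₁,S3 = (−(σ² + Qb² − Pa²) + √((σ² + Qb² − Pa²)² + 4σ²Pa²))/(2σ²); equivalently, a²(P − Pξ)/σ² = γ*₁,S3. -/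
/-!
Write `s = √((1 - α + β)² + 4α)`. Since `s² - (1 - α + β)² = 4α > 0` and
`(1 + α + β)² - s² = 4αβ > 0`, we get `1 - α + β < s < 1 + α + β`, which is exactly
`0 < ξ < 1`. Dividing the quantity under the root in `γ*₁,S3` by `σ⁴` turns it into
`(1 - α + β)² + 4α`, so `γ*₁,S3 = (s - (1 - α + β)) / 2 = α (1 - ξ)`.
-/

open Real

namespace TwoCellDownlink

section

variable {α β : ℝ}

lemma sub_lt_sqrt_discr (hα : 0 < α) : 1 - α + β < √((1 - α + β) ^ 2 + 4 * α) := by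
  have hs := sq_sqrt (show 0 ≤ (1 - α + β) ^ 2 + 4 * α by positivity)
  nlinarith [sqrt_nonneg ((1 - α + β) ^ 2 + 4 * α)]

lemma sqrt_discr_lt (hα : 0 < α) (hβ : 0 < β) :
    √((1 - α + β) ^ 2 + 4 * α) < 1 + α + β := by
  rw [sqrt_lt' (by positivity)]
  nlinarith [mul_pos hα hβ]

lemma xi_pos (hα : 0 < α) (hβ : 0 < β) :
    0 < ((1 + α + β) - √((1 - α + β) ^ 2 + 4 * α)) / (2 * α) :=
  div_pos (sub_pos.2 (sqrt_discr_lt hα hβ)) (by positivity)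

lemma xi_lt_one (hα : 0 < α) :
    ((1 + α + β) - √((1 - α + β) ^ 2 + 4 * α)) / (2 * α) < 1 := by
  rw [div_lt_one (by positivity)]
  linarith [sub_lt_sqrt_discr (β := β) hα]

lemma mul_one_sub_xi (hα : α ≠ 0) :
    α * (1 - ((1 + α + β) - √((1 - α + β) ^ 2 + 4 * α)) / (2 * α)) =
      (-(1 - α + β) + √((1 - α + β) ^ 2 + 4 * α)) / 2 := by
  field_simp
  ring

end

lemma sinr_eq_normalized (a b P Q σ2 : ℝ) (hσ : 0 < σ2) :
    (-(σ2 + Q * b ^ 2 - P * a ^ 2) +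
        √((σ2 + Q * b ^ 2 - P * a ^ 2) ^ 2 + 4 * σ2 * P * a ^ 2)) / (2 * σ2) =
      (-(1 - P * a ^ 2 / σ2 + Q * b ^ 2 / σ2) +
        √((1 - P * a ^ 2 / σ2 + Q * b ^ 2 / σ2) ^ 2 + 4 * (P * a ^ 2 / σ2))) / 2 := by
  have hdiscr : (σ2 + Q * b ^ 2 - P * a ^ 2) ^ 2 + 4 * σ2 * P * a ^ 2 =
      σ2 ^ 2 * ((1 - P * a ^ 2 / σ2 + Q * b ^ 2 / σ2) ^ 2 + 4 * (P * a ^ 2 / σ2)) := by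
    field_simp
    ring
  rw [hdiscr, sqrt_mul (by positivity), sqrt_sq hσ.le]
  field_simp
  ring

end TwoCellDownlink

open TwoCellDownlink in
/-- Properties of `ξ`: it lies in `(0,1)`, and allocating power `Pξ` to UE2's
signal under scheme 4 gives UE1 exactly the SINR `γ*₁,S3` of scheme 3. -/
theorem stmt_15 (a b P Q σ2 : ℝ) (ha : 0 < a) (hb : 0 < b) (hP : 0 < P)
    (hQ : 0 < Q) (hσ : 0 < σ2)
    (α β ξ γS3 : ℝ)
    (hα : α = P * a ^ 2 / σ2) (hβ : β = Q * b ^ 2 / σ2)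
    (hξ : ξ = ((1 + α + β) - Real.sqrt ((1 - α + β) ^ 2 + 4 * α)) / (2 * α))
    (hγ : γS3 = (-(σ2 + Q * b ^ 2 - P * a ^ 2) +
      Real.sqrt ((σ2 + Q * b ^ 2 - P * a ^ 2) ^ 2 + 4 * σ2 * P * a ^ 2)) /
      (2 * σ2)) :
    (0 < ξ ∧ ξ < 1) ∧ α * (1 - ξ) = γS3 ∧ a ^ 2 * (P - P * ξ) / σ2 = γS3 := by
  have hα0 : 0 < α := by rw [hα]; positivity
  have hβ0 : 0 < β := by rw [hβ]; positivity
  have hsinr : α * (1 - ξ) = γS3 := by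
    rw [hξ, mul_one_sub_xi hα0.ne', hγ, sinr_eq_normalized a b P Q σ2 hσ, ← hα, ← hβ]
  refine ⟨⟨hξ ▸ xi_pos hα0 hβ0, hξ ▸ xi_lt_one hα0⟩, hsinr, ?_⟩
  rw [← hsinr, hα]
  ring
end

section
/- Let α = Pa²/σ² > 0, β = Qb²/σ² > 0, ξ = ((1 + α + β) − √((1 − α + β)² + 4α))/(2α), W = 2β(1 + α + β − √((1 − α + β)² + 4α)), and G(v) = (1+ρ)a²v² + 2√Q·a·b·v + Qb² − ρσ² − Pρa². Then W ≥ 0, the denominator 1 + α − β + √((1 − α + β)² + 4α) is positive, and G(√(Pξ)) ≥ 0 holds if and only if ρ ≤ ((1 + α + 3β) − √((1 − α + β)² + 4α) + 2√W)/(1 + α − β + √((1 − α + β)² + 4α)). -/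
/-!
Write `s = √((1 - α + β)² + 4α)`, so that `2αξ = 1 + α + β - s`. Since `α = Pa²/σ²` and
`β = Qb²/σ²`, the cross term `2√Q·a·b·√(Pξ)` equals `σ²·√(4αβξ) = σ²·√W`, and
`G(√(Pξ))` collapses to `σ²/2 · ((1 + α + 3β - s + 2√W) - ρ(1 + α - β + s))`.
The condition `G(√(Pξ)) ≥ 0` is therefore linear in `ρ`, with a positive coefficient
because `s > β - 1 - α`.
-/

section

open Real

variable {α β : ℝ}

theorem sqrt_discr_le_one_add_add (hα : 0 ≤ α) (hβ : 0 ≤ β) :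
    √((1 - α + β) ^ 2 + 4 * α) ≤ 1 + α + β :=
  (sqrt_le_left (by linarith)).mpr (by nlinarith [mul_nonneg hα hβ])

theorem sub_sub_lt_sqrt_discr (hβ : 0 < β) :
    β - 1 - α < √((1 - α + β) ^ 2 + 4 * α) :=
  lt_sqrt_of_sq_lt (by nlinarith)

theorem two_mul_sqrt_mul_mul_sqrt_eq {P Q a b σ2 ξ : ℝ} (hQ : 0 ≤ Q) (ha : 0 ≤ a)
    (hb : 0 ≤ b) (hσ : 0 < σ2) :
    2 * √Q * a * b * √(P * ξ) = σ2 * √(4 * (P * a ^ 2 / σ2) * (Q * b ^ 2 / σ2) * ξ) := by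
  have hsq : 4 * (P * a ^ 2 / σ2) * (Q * b ^ 2 / σ2) * ξ
      = (2 * √Q * a * b / σ2) ^ 2 * (P * ξ) := by
    field_simp
    rw [sq_sqrt hQ]
    ring
  rw [hsq, sqrt_mul (sq_nonneg _), sqrt_sq (by positivity)]
  field_simp

end

theorem stmt_17_general (a b P Q σ2 ρ : ℝ) (ha : 0 < a) (hb : 0 < b) (hP : 0 < P)
    (hQ : 0 < Q) (hσ : 0 < σ2)
    (α β ξ W : ℝ) (G : ℝ → ℝ)
    (hα : α = P * a ^ 2 / σ2) (hβ : β = Q * b ^ 2 / σ2)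
    (hξ : ξ = ((1 + α + β) - Real.sqrt ((1 - α + β) ^ 2 + 4 * α)) / (2 * α))
    (hW : W = 2 * β * (1 + α + β - Real.sqrt ((1 - α + β) ^ 2 + 4 * α)))
    (hG : ∀ v : ℝ, G v = (1 + ρ) * a ^ 2 * v ^ 2 + 2 * Real.sqrt Q * a * b * v +
      Q * b ^ 2 - ρ * σ2 - P * ρ * a ^ 2) :
    W ≥ 0 ∧
    0 < 1 + α - β + Real.sqrt ((1 - α + β) ^ 2 + 4 * α) ∧
    (G (Real.sqrt (P * ξ)) ≥ 0 ↔
      ρ ≤ ((1 + α + 3 * β) - Real.sqrt ((1 - α + β) ^ 2 + 4 * α) +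
            2 * Real.sqrt W) /
          (1 + α - β + Real.sqrt ((1 - α + β) ^ 2 + 4 * α))) := by
  have hα0 : 0 < α := hα ▸ by positivity
  have hβ0 : 0 < β := hβ ▸ by positivity
  have hs_le := sqrt_discr_le_one_add_add hα0.le hβ0.le
  have hden : 0 < 1 + α - β + √((1 - α + β) ^ 2 + 4 * α) := by
    linarith [sub_sub_lt_sqrt_discr (α := α) hβ0]
  set s := √((1 - α + β) ^ 2 + 4 * α)
  have hαξ : 2 * α * ξ = 1 + α + β - s := by rw [hξ]; field_simp
  have hξ0 : 0 ≤ ξ := hξ ▸ div_nonneg (by linarith) (by positivity)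
  have hW_eq : W = 4 * α * β * ξ := by rw [hW, ← hαξ]; ring
  have hcross : 2 * √Q * a * b * √(P * ξ) = σ2 * √W := by
    rw [hW_eq, hα, hβ]
    exact two_mul_sqrt_mul_mul_sqrt_eq hQ.le ha.le hb.le hσ
  have hPa : P * a ^ 2 = α * σ2 := by rw [hα]; field_simp
  have hQb : Q * b ^ 2 = β * σ2 := by rw [hβ]; field_simp
  have hGv : G (√(P * ξ)) =
      σ2 / 2 * ((1 + α + 3 * β - s + 2 * √W) - ρ * (1 + α - β + s)) := by
    rw [hG, Real.sq_sqrt (by positivity), hcross]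
    linear_combination (1 + ρ) * ξ * hPa + hQb - ρ * hPa + (1 + ρ) * σ2 / 2 * hαξ
  refine ⟨by rw [hW_eq]; positivity, hden, ?_⟩
  rw [hGv, ge_iff_le, le_div_iff₀ hden, mul_nonneg_iff_of_pos_left (by positivity), sub_nonneg]

/-- Condition (20) of the paper: `G(√(Pξ)) ≥ 0` iff `ρ` is below the stated
threshold; also `W ≥ 0` and the denominator of the threshold is positive. -/
theorem stmt_17 (a b P Q σ2 ρ : ℝ) (ha : 0 < a) (hb : 0 < b) (hP : 0 < P)
    (hQ : 0 < Q) (hσ : 0 < σ2) (hρ : 0 < ρ)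
    (α β ξ W : ℝ) (G : ℝ → ℝ)
    (hα : α = P * a ^ 2 / σ2) (hβ : β = Q * b ^ 2 / σ2)
    (hξ : ξ = ((1 + α + β) - Real.sqrt ((1 - α + β) ^ 2 + 4 * α)) / (2 * α))
    (hW : W = 2 * β * (1 + α + β - Real.sqrt ((1 - α + β) ^ 2 + 4 * α)))
    (hG : ∀ v : ℝ, G v = (1 + ρ) * a ^ 2 * v ^ 2 + 2 * Real.sqrt Q * a * b * v +
      Q * b ^ 2 - ρ * σ2 - P * ρ * a ^ 2) :
    W ≥ 0 ∧
    0 < 1 + α - β + Real.sqrt ((1 - α + β) ^ 2 + 4 * α) ∧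
    (G (Real.sqrt (P * ξ)) ≥ 0 ↔
      ρ ≤ ((1 + α + 3 * β) - Real.sqrt ((1 - α + β) ^ 2 + 4 * α) +
            2 * Real.sqrt W) /
          (1 + α - β + Real.sqrt ((1 - α + β) ^ 2 + 4 * α))) :=
  stmt_17_general a b P Q σ2 ρ ha hb hP hQ hσ α β ξ W G hα hβ hξ hW hG
end

section
/- Let α = Pa²/σ² > 0 and β = Qb²/σ² > 0, and suppose (√P·a + √Q·b)² ≥ ρσ² (scheme 4 feasible) and ρ ≤ ((1 + α + 3β) − √((1 − α + β)² + 4α) + 2√W)/(1 + α − β + √((1 − α + β)² + 4α)) with W = 2β(1 + α + β − √((1 − α + β)² + 4α)) (condition (20)). Then γ*₁,S4 ≥ γ*₁,S3, where γ*₁,S4 = Pa²/σ² if Qb²/(σ² + Pa²) ≥ ρ and γ*₁,S4 = a²(P − v₂*²)/σ² with v₂* = (√(Pρ(1+ρ)a² + ρ(1+ρ)σ² − ρQb²) − √Q·b)/(a(1+ρ)) otherwise, and γ*₁,S3 = (−(σ² + Qb² − Pa²) + √((σ² + Qb² − Pa²)² + 4σ²Pa²))/(2σ²). -/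
/-!
All quantities depend only on `α`, `β`, `ρ`. The scheme-3 SINR is the nonnegative root `g` of
`g² + (1 - α + β) g = α`; thus `(α - g)(1 + g) = β g`, so `g ≤ α`, which settles the case where
scheme 4 decodes UE2 at full power of BS1. Otherwise scheme 4 reaches `α - x²`, where `x = a v₂*/σ`
is the nonnegative root of `(1 + ρ) x² + 2 √β x = ρ (1 + α) - β`, i.e. the least amplitude with
`(x + √β)² ≥ ρ (1 + α - x²)`. Written in terms of `g`, condition (20) becomes
`ρ (1 + g) ≤ (√(α - g) + √β)²`, which says that `y = √(α - g)` satisfies that inequality;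
hence `x ≤ y` and `α - x² ≥ g`.
-/

open Real

section QuadraticRoot

variable {c m K y : ℝ}

theorem quadRoot_nonneg (hc : 0 ≤ c) (hK : 0 ≤ K) : 0 ≤ (√(m ^ 2 + c * K) - m) / c := by
  have : m ≤ √(m ^ 2 + c * K) :=
    (le_abs_self m).trans (abs_le_sqrt (le_add_of_nonneg_right (mul_nonneg hc hK)))
  exact div_nonneg (sub_nonneg.mpr this) hc

theorem quadRoot_le_of_le (hc : 0 < c) (hm : 0 ≤ m) (hy : 0 ≤ y)
    (hK : K ≤ c * y ^ 2 + 2 * m * y) : (√(m ^ 2 + c * K) - m) / c ≤ y := by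
  have : √(m ^ 2 + c * K) ≤ m + c * y :=
    (sqrt_le_left (by positivity)).mpr (by nlinarith)
  rw [div_le_iff₀ hc]
  linarith

end QuadraticRoot

/- `sinrS3 α β` and `sinrS4 α β ρ` are `γ*₁,S3` and `γ*₁,S4` with `α = Pa²/σ²`, `β = Qb²/σ²`;
`powerS4 α β ρ` is `a v₂*/σ`. -/
noncomputable def sinrS3 (α β : ℝ) : ℝ := (-(1 - α + β) + √((1 - α + β) ^ 2 + 4 * α)) / 2

noncomputable def powerS4 (α β ρ : ℝ) : ℝ :=
  (√(ρ * (1 + ρ) * (1 + α) - ρ * β) - √β) / (1 + ρ)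

noncomputable def sinrS4 (α β ρ : ℝ) : ℝ :=
  if β / (1 + α) ≥ ρ then α else α - powerS4 α β ρ ^ 2

section Normalized

variable {α β ρ : ℝ}

theorem sqrt_discr_sinrS3 (α β : ℝ) :
    √((1 - α + β) ^ 2 + 4 * α) = 2 * sinrS3 α β + (1 - α + β) := by
  unfold sinrS3; ring

theorem sinrS3_sq_add (hα : 0 ≤ α) : sinrS3 α β ^ 2 + (1 - α + β) * sinrS3 α β = α := by
  have h := sq_sqrt (show 0 ≤ (1 - α + β) ^ 2 + 4 * α by positivity)
  rw [sqrt_discr_sinrS3] at h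
  linear_combination h / 4

theorem sinrS3_nonneg (hα : 0 ≤ α) : 0 ≤ sinrS3 α β := by
  have : 1 - α + β ≤ √((1 - α + β) ^ 2 + 4 * α) :=
    (le_abs_self _).trans (abs_le_sqrt (le_add_of_nonneg_right (by positivity)))
  unfold sinrS3; linarith

theorem sinrS3_le_self (hα : 0 ≤ α) (hβ : 0 ≤ β) : sinrS3 α β ≤ α := by
  have hg := sinrS3_nonneg (β := β) hα
  -- `(α - g) (1 + g) = β g` for the root `g`
  nlinarith [sinrS3_sq_add (β := β) hα, mul_nonneg hβ hg]

theorem condition20_rhs_eq (hα : 0 ≤ α) (hβ : 0 ≤ β) :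
    ((1 + α + 3 * β) - √((1 - α + β) ^ 2 + 4 * α) +
        2 * √(2 * β * (1 + α + β - √((1 - α + β) ^ 2 + 4 * α)))) /
      (1 + α - β + √((1 - α + β) ^ 2 + 4 * α)) =
    (√(α - sinrS3 α β) + √β) ^ 2 / (1 + sinrS3 α β) := by
  rw [sqrt_discr_sinrS3]
  set g := sinrS3 α β
  have hg : 0 ≤ g := sinrS3_nonneg hα
  have hgα : 0 ≤ α - g := sub_nonneg.mpr (sinrS3_le_self hα hβ)
  have hW : √(2 * β * (1 + α + β - (2 * g + (1 - α + β)))) = 2 * √β * √(α - g) := by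
    rw [show 2 * β * (1 + α + β - (2 * g + (1 - α + β))) = 2 ^ 2 * β * (α - g) by ring,
      sqrt_mul (by positivity), sqrt_mul (by positivity), sqrt_sq zero_le_two]
  rw [hW, add_sq, sq_sqrt hgα, sq_sqrt hβ,
    show 1 + α - β + (2 * g + (1 - α + β)) = 2 * (1 + g) by ring]
  field_simp
  ring

theorem sinrS3_le_sinrS4 (hα : 0 ≤ α) (hβ : 0 ≤ β) (hρ : 0 < ρ)
    (h : ρ ≤ (√(α - sinrS3 α β) + √β) ^ 2 / (1 + sinrS3 α β)) :
    sinrS3 α β ≤ sinrS4 α β ρ := by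
  unfold sinrS4
  split_ifs with hinterf
  · exact sinrS3_le_self hα hβ
  set g := sinrS3 α β
  have hg : 0 ≤ g := sinrS3_nonneg hα
  have hgα : 0 ≤ α - g := sub_nonneg.mpr (sinrS3_le_self hα hβ)
  have hK : 0 ≤ ρ * (1 + α) - β := by
    rw [ge_iff_le, not_le, div_lt_iff₀ (by linarith)] at hinterf
    linarith
  have hpow : powerS4 α β ρ = (√(√β ^ 2 + (1 + ρ) * (ρ * (1 + α) - β)) - √β) / (1 + ρ) := by
    rw [powerS4, sq_sqrt hβ]; ring_nf
  have hy : ρ * (1 + α) - β ≤ (1 + ρ) * √(α - g) ^ 2 + 2 * √β * √(α - g) := by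
    rw [le_div_iff₀ (by linarith), add_sq, sq_sqrt hgα, sq_sqrt hβ] at h
    rw [sq_sqrt hgα]
    linarith
  have hle : powerS4 α β ρ ≤ √(α - g) := by
    rw [hpow]; exact quadRoot_le_of_le (by linarith) (sqrt_nonneg _) (sqrt_nonneg _) hy
  have h0 : 0 ≤ powerS4 α β ρ := by
    rw [hpow]; exact quadRoot_nonneg (by linarith) hK
  have hsq := pow_le_pow_left₀ h0 hle 2
  rw [sq_sqrt hgα] at hsq
  linarith

end Normalized

section PhysicalUnits

variable {a b P Q σ2 ρ : ℝ}

theorem sinrS3_div (hσ : 0 < σ2) (p q : ℝ) :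
    (-(σ2 + q - p) + √((σ2 + q - p) ^ 2 + 4 * σ2 * p)) / (2 * σ2) = sinrS3 (p / σ2) (q / σ2) := by
  have : (σ2 + q - p) ^ 2 + 4 * σ2 * p = σ2 ^ 2 * ((1 - p / σ2 + q / σ2) ^ 2 + 4 * (p / σ2)) := by
    field_simp; ring
  rw [this, sqrt_mul (sq_nonneg _), sqrt_sq hσ.le, sinrS3]
  field_simp
  ring

theorem sinrS4_div (ha : a ≠ 0) (hb : 0 ≤ b) (hQ : 0 ≤ Q) (hσ : 0 < σ2) (hρ : 1 + ρ ≠ 0) :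
    (if Q * b ^ 2 / (σ2 + P * a ^ 2) ≥ ρ then P * a ^ 2 / σ2
      else a ^ 2 * (P - ((√(P * ρ * (1 + ρ) * a ^ 2 + ρ * (1 + ρ) * σ2 - ρ * Q * b ^ 2) -
        √Q * b) / (a * (1 + ρ))) ^ 2) / σ2) =
      sinrS4 (P * a ^ 2 / σ2) (Q * b ^ 2 / σ2) ρ := by
  have hcase : Q * b ^ 2 / (σ2 + P * a ^ 2) = Q * b ^ 2 / σ2 / (1 + P * a ^ 2 / σ2) := by
    field_simp
  have hR : ρ * (1 + ρ) * (1 + P * a ^ 2 / σ2) - ρ * (Q * b ^ 2 / σ2) =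
      (P * ρ * (1 + ρ) * a ^ 2 + ρ * (1 + ρ) * σ2 - ρ * Q * b ^ 2) / σ2 := by
    field_simp; ring
  have hq : √(Q * b ^ 2 / σ2) = √Q * b / √σ2 := by
    rw [sqrt_div' _ hσ.le, sqrt_mul hQ, sqrt_sq hb]
  have hs : √σ2 ^ 2 = σ2 := sq_sqrt hσ.le
  rw [sinrS4, powerS4, hcase, hR, sqrt_div' _ hσ.le, hq]
  congr 1
  field_simp
  rw [hs]
  ring

end PhysicalUnits

theorem stmt_19_general (a b P Q σ2 ρ : ℝ) (ha : 0 < a) (hb : 0 < b) (hP : 0 < P)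
    (hQ : 0 < Q) (hσ : 0 < σ2) (hρ : 0 < ρ)
    (α β W v2star γS3 γS4 : ℝ)
    (hα : α = P * a ^ 2 / σ2) (hβ : β = Q * b ^ 2 / σ2)
    (hW : W = 2 * β * (1 + α + β - Real.sqrt ((1 - α + β) ^ 2 + 4 * α)))
    (hcond : ρ ≤ ((1 + α + 3 * β) - Real.sqrt ((1 - α + β) ^ 2 + 4 * α) +
        2 * Real.sqrt W) /
      (1 + α - β + Real.sqrt ((1 - α + β) ^ 2 + 4 * α)))
    (hv2 : v2star =
      (Real.sqrt (P * ρ * (1 + ρ) * a ^ 2 + ρ * (1 + ρ) * σ2 - ρ * Q * b ^ 2) -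
        Real.sqrt Q * b) / (a * (1 + ρ)))
    (hγ4 : γS4 = if Q * b ^ 2 / (σ2 + P * a ^ 2) ≥ ρ
      then P * a ^ 2 / σ2
      else a ^ 2 * (P - v2star ^ 2) / σ2)
    (hγ3 : γS3 = (-(σ2 + Q * b ^ 2 - P * a ^ 2) +
      Real.sqrt ((σ2 + Q * b ^ 2 - P * a ^ 2) ^ 2 + 4 * σ2 * P * a ^ 2)) /
      (2 * σ2)) :
    γS4 ≥ γS3 := by
  have hα0 : 0 ≤ α := by rw [hα]; positivity
  have hβ0 : 0 ≤ β := by rw [hβ]; positivity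
  have h3 : γS3 = sinrS3 α β := by
    rw [hγ3, hα, hβ, ← sinrS3_div hσ, mul_assoc (4 * σ2)]
  have h4 : γS4 = sinrS4 α β ρ := by
    rw [hγ4, hv2, hα, hβ, sinrS4_div ha.ne' hb.le hQ.le hσ (by positivity)]
  rw [hW, condition20_rhs_eq hα0 hβ0] at hcond
  rw [h3, h4]
  exact sinrS3_le_sinrS4 hα0 hβ0 hρ hcond

/-- Main comparison result: under feasibility of scheme 4 and condition (20),
the proposed cooperative NOMA scheme 4 outperforms the interference-suppression
scheme 3, i.e., `γ*₁,S4 ≥ γ*₁,S3`. -/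
theorem stmt_19 (a b P Q σ2 ρ : ℝ) (ha : 0 < a) (hb : 0 < b) (hP : 0 < P)
    (hQ : 0 < Q) (hσ : 0 < σ2) (hρ : 0 < ρ)
    (α β W v2star γS3 γS4 : ℝ)
    (hα : α = P * a ^ 2 / σ2) (hβ : β = Q * b ^ 2 / σ2)
    (hW : W = 2 * β * (1 + α + β - Real.sqrt ((1 - α + β) ^ 2 + 4 * α)))
    (hfeas : (Real.sqrt P * a + Real.sqrt Q * b) ^ 2 ≥ ρ * σ2)
    (hcond : ρ ≤ ((1 + α + 3 * β) - Real.sqrt ((1 - α + β) ^ 2 + 4 * α) +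
        2 * Real.sqrt W) /
      (1 + α - β + Real.sqrt ((1 - α + β) ^ 2 + 4 * α)))
    (hv2 : v2star =
      (Real.sqrt (P * ρ * (1 + ρ) * a ^ 2 + ρ * (1 + ρ) * σ2 - ρ * Q * b ^ 2) -
        Real.sqrt Q * b) / (a * (1 + ρ)))
    (hγ4 : γS4 = if Q * b ^ 2 / (σ2 + P * a ^ 2) ≥ ρ
      then P * a ^ 2 / σ2
      else a ^ 2 * (P - v2star ^ 2) / σ2)
    (hγ3 : γS3 = (-(σ2 + Q * b ^ 2 - P * a ^ 2) +
      Real.sqrt ((σ2 + Q * b ^ 2 - P * a ^ 2) ^ 2 + 4 * σ2 * P * a ^ 2)) /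
      (2 * σ2)) :
    γS4 ≥ γS3 :=
  stmt_19_general a b P Q σ2 ρ ha hb hP hQ hσ hρ α β W v2star γS3 γS4 hα hβ hW hcond hv2 hγ4 hγ3
end
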